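/- Let G be a group (written additively but not necessarily abelian) admitting an exact factorization G = A + B with A, B subgroups and A ∩ B = {0}. Define x∘y = a + y + b whenever x = a + b with a ∈ A, b ∈ B. Then for z = c + d with c ∈ A, d ∈ B, c, d and z all central in G, the map k(x) = x + z is a reflection of the solution (G, r_G), where r_G(x,y) = (λ_x(y), μ_y(x)) with λ_x(y) = -x + x∘y and μ_y(x) = λ_x(y)' ∘ x ∘ y. -/
import Mathlib


section Factorization

variable {G : Type*} [AddGroup G]

/-- Given factorization maps fA, fB (so x = fA x + fB x), the skew brace circle
operation x∘y = fA x + y + fB x. -/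
def circOf (fA fB : G → G) (x y : G) : G := fA x + y + fB x

/-- The ∘-inverse of x = a + b, namely -a - b. -/
def cinvOf (fA fB : G → G) (x : G) : G := -fA x - fB x

/-- λ_x(y) = -x + x∘y. -/
def lamOf (fA fB : G → G) (x y : G) : G := -x + circOf fA fB x y

/-- μ_y(x) = λ_x(y)ʹ ∘ (x∘y). -/
def muOf (fA fB : G → G) (y x : G) : G :=
  circOf fA fB (cinvOf fA fB (lamOf fA fB x y)) (circOf fA fB x y)

/-- The Yang–Baxter map r_G(x,y) = (λ_x(y), μ_y(x)). -/
def rOf (fA fB : G → G) : G × G → G × G :=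
  fun p => (lamOf fA fB p.1 p.2, muOf fA fB p.2 p.1)

/-- `id × k` on pairs. -/
def k2map {X : Type*} (k : X → X) : X × X → X × X := fun p => (p.1, k p.2)

end Factorization

/-- Theorem 4.2: for an exact factorization G = A + B and central elements
c ∈ A, d ∈ B with z = c + d central, the map k(x) = x + z is a reflection of
the associated solution (G, r_G). -/
theorem statement15 {G : Type*} [AddGroup G] (A B : AddSubgroup G)
    (fA fB : G → G) (hfA : ∀ g, fA g ∈ A) (hfB : ∀ g, fB g ∈ B)
    (hsum : ∀ g, fA g + fB g = g)
    (hexact : ∀ g ∈ A, g ∈ B → g = 0)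
    (c d : G) (hc : c ∈ A) (hd : d ∈ B)
    (hccen : ∀ g : G, c + g = g + c) (hdcen : ∀ g : G, d + g = g + d)
    (hzcen : ∀ g : G, (c + d) + g = g + (c + d)) :
    rOf fA fB ∘ k2map (fun x => x + (c + d)) ∘ rOf fA fB ∘
        k2map (fun x => x + (c + d)) =
      k2map (fun x => x + (c + d)) ∘ rOf fA fB ∘
        k2map (fun x => x + (c + d)) ∘ rOf fA fB := by
  classical
  have pc : ∀ g : G, c + g = g + c := hccen
  have pd : ∀ g : G, d + g = g + d := hdcen
  have pnc : ∀ g : G, -c + g = g + -c := by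
    intro g
    calc -c + g = -c + (g + c) + -c := by
          rw [add_assoc, add_assoc, add_neg_cancel, add_zero]
      _ = -c + (c + g) + -c := by rw [hccen]
      _ = g + -c := by rw [neg_add_cancel_left]
  have pnd : ∀ g : G, -d + g = g + -d := by
    intro g
    calc -d + g = -d + (g + d) + -d := by
          rw [add_assoc, add_assoc, add_neg_cancel, add_zero]
      _ = -d + (d + g) + -d := by rw [hdcen]
      _ = g + -d := by rw [neg_add_cancel_left]
  -- uniqueness of the decomposition
  have uA : ∀ a b : G, a ∈ A → b ∈ B → fA (a + b) = a := by
    intro a b ha hb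
    have key := hsum (a + b)
    have h2 : fA (a + b) = (a + b) + -(fB (a + b)) := by
      rw [eq_sub_of_add_eq key, sub_eq_add_neg]
    have h1 : -a + fA (a + b) = b + -(fB (a + b)) := by
      rw [h2, ← add_assoc, neg_add_cancel_left]
    have hmem1 : -a + fA (a + b) ∈ A := A.add_mem (A.neg_mem ha) (hfA _)
    have hmem2 : -a + fA (a + b) ∈ B := by
      rw [h1]; exact B.add_mem hb (B.neg_mem (hfB _))
    have h0 := hexact _ hmem1 hmem2
    rwa [neg_add_eq_zero, eq_comm] at h0
  have uB : ∀ a b : G, a ∈ A → b ∈ B → fB (a + b) = b := by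
    intro a b ha hb
    have key := hsum (a + b)
    rw [uA a b ha hb] at key
    exact add_left_cancel key
  have decomp : ∀ g : G, g + (c + d) = (fA g + c) + (fB g + d) := by
    intro g
    conv_lhs => rw [← hsum g]
    rw [add_assoc (fA g), ← add_assoc (fB g) c d, ← hccen (fB g),
      add_assoc c, ← add_assoc (fA g)]
  have shiftA : ∀ g : G, fA (g + (c + d)) = fA g + c := by
    intro g
    rw [decomp g]
    exact uA _ _ (A.add_mem (hfA g) hc) (B.add_mem (hfB g) hd)
  have shiftB : ∀ g : G, fB (g + (c + d)) = fB g + d := by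
    intro g
    rw [decomp g]
    exact uB _ _ (A.add_mem (hfA g) hc) (B.add_mem (hfB g) hd)
  have cinv_eq : ∀ g : G, cinvOf fA fB g = -fA g + -fB g := by
    intro g; rw [cinvOf, sub_eq_add_neg]
  have invA : ∀ g : G, fA (cinvOf fA fB g) = -fA g := by
    intro g
    rw [cinv_eq g]
    exact uA _ _ (A.neg_mem (hfA g)) (B.neg_mem (hfB g))
  have invB : ∀ g : G, fB (cinvOf fA fB g) = -fB g := by
    intro g
    rw [cinv_eq g]
    exact uB _ _ (A.neg_mem (hfA g)) (B.neg_mem (hfB g))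
  -- key shift lemmas for lambda and mu
  have lam2 : ∀ x y : G, lamOf fA fB x (y + (c + d)) = lamOf fA fB x y + (c + d) := by
    intro x y
    simp only [lamOf, circOf, neg_add_rev, add_assoc]
    try simp only [add_assoc, pnc]
    try simp only [add_assoc, pc]
    try simp only [add_assoc, pnd]
    try simp only [add_assoc, pd]
  have lam1inv : ∀ x y : G, lamOf fA fB (x + (c + d)) y = lamOf fA fB x y := by
    intro x y
    simp only [lamOf, circOf, shiftA, shiftB, neg_add_rev, add_assoc]
    try simp only [add_assoc, pnc]
    try simp only [add_assoc, pc]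
    try simp only [add_assoc, pnd]
    try simp only [add_assoc, pd]
    try simp only [add_assoc, neg_add_cancel_left, add_neg_cancel_left,
      neg_add_cancel, add_neg_cancel, add_zero, zero_add]
  have mu1 : ∀ x y : G, muOf fA fB (y + (c + d)) x = muOf fA fB y x := by
    intro x y
    simp only [muOf, circOf, invA, invB, lam2, shiftA, shiftB, neg_add_rev, add_assoc]
    try simp only [add_assoc, pnc]
    try simp only [add_assoc, pc]
    try simp only [add_assoc, pnd]
    try simp only [add_assoc, pd]
    try simp only [add_assoc, neg_add_cancel_left, add_neg_cancel_left,
      neg_add_cancel, add_neg_cancel, add_zero, zero_add]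
  have mu2 : ∀ x y : G, muOf fA fB y (x + (c + d)) = muOf fA fB y x + (c + d) := by
    intro x y
    simp only [muOf, circOf, invA, invB, lam1inv, shiftA, shiftB, neg_add_rev, add_assoc]
    try simp only [add_assoc, pnc]
    try simp only [add_assoc, pc]
    try simp only [add_assoc, pnd]
    try simp only [add_assoc, pd]
    try simp only [add_assoc, neg_add_cancel_left, add_neg_cancel_left,
      neg_add_cancel, add_neg_cancel, add_zero, zero_add]
  funext p
  obtain ⟨x, y⟩ := p
  simp only [Function.comp_apply, rOf, k2map]
  simp only [lam2, lam1inv, mu1, mu2]
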